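/- arXiv:1002.2486 — 2 statements merged into one kernel-verified Lean document; each statement's English description precedes it below -/
import Mathlib

section
/- Assume ‖θ‖_T = 0. Then for every ζ ∈ (0,1) and every α ∈ (0,1/2), the strategy ν* = (0, v^γ) with γ = min(T/(T+1), ζ) satisfies the VaR constraint at level ζ and maximizes J(x,·) over all ν ∈ U satisfying the VaR constraint at level ζ; moreover γ is the unique maximizer of κ ↦ ln(1−κ) + T ln κ over (0,ζ]. -/
open MeasureTheory Real Set Filter
open scoped RealInnerProductSpace ENNReal

noncomputable section

abbrev E (d : ℕ) := EuclideanSpace ℝ (Fin d)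

/-- ω(t) = T − t + 1 -/
def om (T t : ℝ) : ℝ := T - t + 1

/-- running L²-norm ‖y‖_t = (∫₀^t |y_s|² ds)^{1/2} -/
def nrm {d : ℕ} (y : ℝ → E d) (t : ℝ) : ℝ :=
  Real.sqrt (∫ s in Set.Ioc (0:ℝ) t, ‖y s‖ ^ 2)

/-- running inner product (y,θ)_t = ∫₀^t y_s'θ_s ds -/
def ipr {d : ℕ} (y θ : ℝ → E d) (t : ℝ) : ℝ :=
  ∫ s in Set.Ioc (0:ℝ) t, ⟪y s, θ s⟫

/-- membership in L²([0,T];ℝ^d) -/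
def L2fun {d : ℕ} (T : ℝ) (y : ℝ → E d) : Prop :=
  Measurable y ∧ IntegrableOn (fun t => ‖y t‖ ^ 2) (Set.Ioc 0 T)

def k1 {d : ℕ} (T : ℝ) (θ : ℝ → E d) : ℝ :=
  ∫ t in Set.Ioc (0:ℝ) T, om T t * ‖θ t‖ ^ 2

def k2 {d : ℕ} (T : ℝ) (θ : ℝ → E d) : ℝ :=
  ∫ t in Set.Ioc (0:ℝ) T, om T t ^ 2 * ‖θ t‖ ^ 2

/-- cumulated consumption V_t = ∫₀^t v_s ds -/
def Vtot (v : ℝ → ℝ) (t : ℝ) : ℝ := ∫ s in Set.Ioc (0:ℝ) t, v s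

/-- the set U of admissible deterministic strategies -/
def Admiss {d : ℕ} (T : ℝ) (y : ℝ → E d) (v : ℝ → ℝ) : Prop :=
  Measurable y ∧ IntegrableOn (fun t => ‖y t‖ ^ 2) (Set.Ioc 0 T) ∧
    Measurable v ∧ (∀ t ∈ Set.Icc (0:ℝ) T, 0 < v t) ∧
    IntegrableOn v (Set.Ioc 0 T) ∧
    IntegrableOn (fun t => max (-Real.log (v t)) 0) (Set.Ioc 0 T)

/-- the cost J(x,ν) -/
def Jcost {d : ℕ} (T x : ℝ) (r : ℝ → ℝ) (θ y : ℝ → E d) (v : ℝ → ℝ) : ℝ :=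
  (T + 1) * Real.log x
    + (∫ t in Set.Ioc (0:ℝ) T, om T t * (r t + ⟪y t, θ t⟫ - ‖y t‖ ^ 2 / 2))
    + (∫ t in Set.Ioc (0:ℝ) T, (Real.log (v t) - Vtot v t))
    - Vtot v T

/-- A(x) = (T+1)ln x + ∫₀^T ω(t)r_t dt − T ln T -/
def Aconst (T x : ℝ) (r : ℝ → ℝ) : ℝ :=
  (T + 1) * Real.log x + (∫ t in Set.Ioc (0:ℝ) T, om T t * r t) - T * Real.log T

/-- v^κ_t = κ/(T − tκ) -/
def vk (T k t : ℝ) : ℝ := k / (T - t * k)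

/-- the VaR constraint at level ζ -/
def VaROK {d : ℕ} (T : ℝ) (θ y : ℝ → E d) (v : ℝ → ℝ) (qa z : ℝ) : Prop :=
  ∀ t ∈ Set.Icc (0:ℝ) T,
    Real.log (1 - z) ≤ ipr y θ t - nrm y t ^ 2 / 2 - Vtot v t - |qa| * nrm y t

/-!
Since `θ = 0` a.e., the investment part of `J` is maximised by `y = 0`, and the VaR constraint
at `t = T` reduces to `V_T ≤ -ln (1 - ζ)`. The consumption part of `J` equals
`∫₀^T (ln v_t - ω(t) v_t) dt`. With the Lagrange multiplier `ℓ = T / γ - (T + 1) ≥ 0` one has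
`v^γ_t = 1 / (ω(t) + ℓ)`, which maximises `ln v - (ω(t) + ℓ) v` pointwise (tangent line of `ln`), so
`J(ν) ≤ J(ν*) + ℓ (V_T - V^γ_T)`, and the last term is `≤ 0` because `ℓ = 0` unless `γ = ζ`, in
which case `V^γ_T = -ln (1 - ζ)`. The same tangent-line bound for `ln`, at `1 - γ` and at `γ`, shows
that `γ` strictly maximises `κ ↦ ln (1 - κ) + T ln κ` on `(0, ζ]`.
-/

section Candidate

variable {T γ : ℝ}

lemma sub_mul_pos_of_mem_Icc (hT : 0 < T) (hγ : γ < 1) {t : ℝ} (ht : t ∈ Icc 0 T) :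
    0 < T - t * γ := by
  rcases le_or_gt γ 0 with hγ0 | hγ0
  · nlinarith [mul_nonneg ht.1 (neg_nonneg.2 hγ0)]
  · nlinarith [mul_le_mul_of_nonneg_right ht.2 hγ0.le]

lemma vk_pos (hT : 0 < T) (hγ0 : 0 < γ) (hγ1 : γ < 1) {t : ℝ} (ht : t ∈ Icc 0 T) :
    0 < vk T γ t :=
  div_pos hγ0 (sub_mul_pos_of_mem_Icc hT hγ1 ht)

lemma continuousOn_vk (hT : 0 < T) (hγ : γ < 1) : ContinuousOn (vk T γ) (Icc 0 T) :=
  continuousOn_const.div (by fun_prop) fun _ ht => (sub_mul_pos_of_mem_Icc hT hγ ht).ne'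

lemma integrableOn_vk (hT : 0 < T) (hγ : γ < 1) : IntegrableOn (vk T γ) (Ioc 0 T) :=
  (continuousOn_vk hT hγ).integrableOn_Icc.mono_set Ioc_subset_Icc_self

lemma continuousOn_log_vk (hT : 0 < T) (hγ0 : 0 < γ) (hγ1 : γ < 1) :
    ContinuousOn (fun t => log (vk T γ t)) (Icc 0 T) :=
  (continuousOn_vk hT hγ1).log fun _ ht => (vk_pos hT hγ0 hγ1 ht).ne'

lemma vk_eq_inv (hγ : γ ≠ 0) (t : ℝ) : vk T γ t = (T / γ - t)⁻¹ := by
  rw [vk, div_sub' hγ, inv_div, mul_comm]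

lemma Vtot_vk (hT : 0 < T) (hγ : γ < 1) {t : ℝ} (ht : t ∈ Icc 0 T) :
    Vtot (vk T γ) t = log T - log (T - t * γ) := by
  have hderiv : ∀ s ∈ uIcc 0 t, HasDerivAt (fun u => -log (T - u * γ)) (vk T γ s) s := by
    intro s hs
    rw [uIcc_of_le ht.1] at hs
    have hpos := sub_mul_pos_of_mem_Icc hT hγ ⟨hs.1, hs.2.trans ht.2⟩
    have hlin : HasDerivAt (fun u => T - u * γ) (-γ) s := by
      simpa using ((hasDerivAt_id s).mul_const γ).const_sub T
    simpa [vk, neg_div] using (hlin.log hpos.ne').fun_neg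
  have hint : IntervalIntegrable (vk T γ) volume 0 t :=
    ((continuousOn_vk hT hγ).mono (Icc_subset_Icc_right ht.2)).intervalIntegrable_of_Icc ht.1
  rw [Vtot, ← intervalIntegral.integral_of_le ht.1,
    intervalIntegral.integral_eq_sub_of_hasDerivAt hderiv hint]
  simp only [zero_mul, sub_zero]
  ring

lemma Vtot_vk_self (hT : 0 < T) (hγ : γ < 1) : Vtot (vk T γ) T = -log (1 - γ) := by
  rw [Vtot_vk hT hγ ⟨hT.le, le_rfl⟩, show T - T * γ = T * (1 - γ) by ring,
    log_mul hT.ne' (by linarith)]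
  ring

lemma admiss_zero_vk {d : ℕ} (hT : 0 < T) (hγ0 : 0 < γ) (hγ1 : γ < 1) :
    Admiss T (fun _ => (0 : E d)) (vk T γ) := by
  have hlog : ContinuousOn (fun t => max (-log (vk T γ t)) 0) (Icc 0 T) :=
    (continuousOn_log_vk hT hγ0 hγ1).neg.sup continuousOn_const
  refine ⟨measurable_const, by simp, by unfold vk; fun_prop, fun t ht => vk_pos hT hγ0 hγ1 ht,
    integrableOn_vk hT hγ1, hlog.integrableOn_Icc.mono_set Ioc_subset_Icc_self⟩

lemma VaROK_zero_vk {d : ℕ} (hT : 0 < T) (hγ0 : 0 < γ) (θ : ℝ → E d) (qa : ℝ) {z : ℝ}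
    (hz : z < 1) (hγz : γ ≤ z) : VaROK T θ (fun _ => (0 : E d)) (vk T γ) qa z := by
  intro t ht
  have hγ1 : γ < 1 := hγz.trans_lt hz
  have hpos := sub_mul_pos_of_mem_Icc hT hγ1 ht
  have hle : 1 - z ≤ (T - t * γ) / T := by
    rw [le_div_iff₀ hT]
    nlinarith [ht.2]
  simp only [ipr, nrm, inner_zero_left, norm_zero, zero_pow two_ne_zero, integral_zero, sqrt_zero]
  rw [Vtot_vk hT hγ1 ht]
  have := log_le_log (by linarith) hle
  rw [log_div hpos.ne' hT.ne'] at this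
  linarith

end Candidate

section Cost

variable {T : ℝ}

lemma integrableOn_Ioc_continuous_mul {g f : ℝ → ℝ} (hg : Continuous g)
    (hf : IntegrableOn f (Ioc 0 T)) : IntegrableOn (fun t => g t * f t) (Ioc 0 T) :=
  hf.continuousOn_mul_of_subset hg.continuousOn isCompact_Icc measurableSet_Ioc
    Ioc_subset_Icc_self

lemma continuous_om : Continuous (om T) := by
  unfold om
  fun_prop

lemma integrableOn_log_of_integrableOn {v : ℝ → ℝ} {s : Set ℝ} (hv : IntegrableOn v s)
    (hlog : IntegrableOn (fun t => max (-log (v t)) 0) s) :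
    IntegrableOn (fun t => log (v t)) s := by
  refine (hlog.add hv.norm).mono'
    (measurable_log.comp_aemeasurable hv.aemeasurable).aestronglyMeasurable
    (Eventually.of_forall fun t => ?_)
  simp only [Pi.add_apply, norm_eq_abs, abs_le]
  have hself : log (v t) ≤ |v t| := by
    rw [← log_abs]
    exact log_le_self (abs_nonneg _)
  constructor <;>
    linarith [le_max_left (-log (v t)) 0, le_max_right (-log (v t)) 0, abs_nonneg (v t)]

lemma integral_Vtot {v : ℝ → ℝ} (hv : IntegrableOn v (Ioc 0 T)) :
    ∫ t in Ioc (0:ℝ) T, Vtot v t = ∫ s in Ioc (0:ℝ) T, (T - s) * v s := by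
  set μ := volume.restrict (Ioc (0:ℝ) T)
  have hkernel : Function.uncurry (fun t s => (Iic t).indicator v s)
      = {p : ℝ × ℝ | p.2 ≤ p.1}.indicator (fun p => v p.2) := by
    ext ⟨t, s⟩
    by_cases h : s ≤ t <;> simp [Set.indicator, h]
  have hint : Integrable (Function.uncurry fun t s => (Iic t).indicator v s) (μ.prod μ) := by
    rw [hkernel]
    exact (hv.comp_snd μ).indicator (measurableSet_le measurable_snd measurable_fst)
  convert integral_integral_swap hint using 1
  · refine setIntegral_congr_fun measurableSet_Ioc fun t ht => ?_
    rw [setIntegral_indicator measurableSet_Iic, Ioc_inter_Iic, min_eq_right ht.2]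
    rfl
  · refine setIntegral_congr_fun measurableSet_Ioc fun s hs => ?_
    have hswap : (fun t => (Iic t).indicator v s) = (Ici s).indicator fun _ => v s := by
      ext t
      by_cases h : s ≤ t <;> simp [Set.indicator, h]
    have hinter : Ioc 0 T ∩ Ici s = Icc s T := by
      ext u
      simp only [mem_inter_iff, mem_Ioc, mem_Ici, mem_Icc]
      exact ⟨fun h => ⟨h.2, h.1.2⟩, fun h => ⟨⟨hs.1.trans_le h.1, h.2⟩, h.1⟩⟩
    simp only [hswap]
    rw [setIntegral_indicator measurableSet_Ici, setIntegral_const, hinter, Measure.real,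
      Real.volume_Icc, ENNReal.toReal_ofReal (sub_nonneg.2 hs.2), smul_eq_mul]

lemma integrableOn_om_mul {f : ℝ → ℝ} (hf : IntegrableOn f (Ioc 0 T)) :
    IntegrableOn (fun t => om T t * f t) (Ioc 0 T) :=
  integrableOn_Ioc_continuous_mul continuous_om hf

lemma om_nonneg {t : ℝ} (ht : t ≤ T) : 0 ≤ om T t := by
  unfold om
  linarith

/-- Fubini turns `∫₀^T V_t dt + V_T` into `∫₀^T ω(t) v_t dt`. -/
lemma Jcost_eq {d : ℕ} (x : ℝ) (r : ℝ → ℝ) (θ y : ℝ → E d) {v : ℝ → ℝ}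
    (hv : IntegrableOn v (Ioc 0 T)) (hlog : IntegrableOn (fun t => max (-log (v t)) 0) (Ioc 0 T)) :
    Jcost T x r θ y v = (T + 1) * log x
      + (∫ t in Ioc (0:ℝ) T, om T t * (r t + ⟪y t, θ t⟫ - ‖y t‖ ^ 2 / 2))
      + ∫ t in Ioc (0:ℝ) T, (log (v t) - om T t * v t) := by
  have hlogv := integrableOn_log_of_integrableOn hv hlog
  have hVtot : IntegrableOn (Vtot v) (Ioc 0 T) :=
    ((intervalIntegral.continuousOn_primitive ((integrableOn_Icc_iff_integrableOn_Ioc).2 hv)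
      ).integrableOn_Icc).mono_set Ioc_subset_Icc_self
  have hom : ∫ t in Ioc (0:ℝ) T, om T t * v t
      = (∫ t in Ioc (0:ℝ) T, (T - t) * v t) + ∫ t in Ioc (0:ℝ) T, v t := by
    rw [← integral_add (integrableOn_Ioc_continuous_mul (by fun_prop) hv) hv]
    congr 1 with t
    rw [om]
    ring
  rw [Jcost, integral_sub hlogv hVtot, integral_sub hlogv (integrableOn_om_mul hv), hom,
    integral_Vtot hv, Vtot]
  ring

end Cost

section Comparison

variable {T : ℝ}

lemma ae_eq_zero_of_nrm_eq_zero {d : ℕ} {θ : ℝ → E d}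
    (hθ2 : IntegrableOn (fun t => ‖θ t‖ ^ 2) (Ioc 0 T)) (hθ0 : nrm θ T = 0) :
    ∀ᵐ t ∂volume.restrict (Ioc (0:ℝ) T), θ t = 0 := by
  have hnonneg : 0 ≤ᵐ[volume.restrict (Ioc (0:ℝ) T)] fun t => ‖θ t‖ ^ 2 :=
    Eventually.of_forall fun t => sq_nonneg _
  have hzero : ∫ t in Ioc (0:ℝ) T, ‖θ t‖ ^ 2 = 0 :=
    le_antisymm (sqrt_eq_zero'.1 hθ0) (integral_nonneg_of_ae hnonneg)
  filter_upwards [(integral_eq_zero_iff_of_nonneg_ae hnonneg hθ2).1 hzero] with t ht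
  simpa using ht

lemma integral_om_mul_le_of_ae_eq_zero {d : ℕ} {r : ℝ → ℝ} {θ y : ℝ → E d}
    (hr : IntegrableOn r (Ioc 0 T)) (hy : IntegrableOn (fun t => ‖y t‖ ^ 2) (Ioc 0 T))
    (hθ : ∀ᵐ t ∂volume.restrict (Ioc (0:ℝ) T), θ t = 0) :
    ∫ t in Ioc (0:ℝ) T, om T t * (r t + ⟪y t, θ t⟫ - ‖y t‖ ^ 2 / 2)
      ≤ ∫ t in Ioc (0:ℝ) T, om T t * r t := by
  have hae : (fun t => om T t * (r t + ⟪y t, θ t⟫ - ‖y t‖ ^ 2 / 2))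
      =ᵐ[volume.restrict (Ioc (0:ℝ) T)] fun t => om T t * r t - om T t * (‖y t‖ ^ 2 / 2) := by
    filter_upwards [hθ] with t ht
    simp only [ht, inner_zero_right]
    ring
  have hpenalty : 0 ≤ ∫ t in Ioc (0:ℝ) T, om T t * (‖y t‖ ^ 2 / 2) :=
    setIntegral_nonneg measurableSet_Ioc fun t ht => mul_nonneg (om_nonneg ht.2) (by positivity)
  rw [integral_congr_ae hae, integral_sub (integrableOn_om_mul hr)
    (integrableOn_om_mul (hy.div_const 2))]
  linarith

lemma Vtot_le_of_VaROK {d : ℕ} {θ y : ℝ → E d} {v : ℝ → ℝ} {qa z : ℝ} (hT : 0 ≤ T)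
    (hVaR : VaROK T θ y v qa z) (hθ : ∀ᵐ t ∂volume.restrict (Ioc (0:ℝ) T), θ t = 0) :
    Vtot v T ≤ -log (1 - z) := by
  have hipr : ipr y θ T = 0 :=
    integral_eq_zero_of_ae (by filter_upwards [hθ] with t ht; simp [ht])
  have := hVaR T ⟨hT, le_rfl⟩
  rw [hipr] at this
  have hnrm : 0 ≤ nrm y T := sqrt_nonneg _
  nlinarith [mul_nonneg (abs_nonneg qa) hnrm, sq_nonneg (nrm y T)]

lemma log_sub_mul_le {v c : ℝ} (hv : 0 < v) (hc : 0 < c) : log v - c * v ≤ -log c - 1 := by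
  have := log_le_sub_one_of_pos (mul_pos hc hv)
  rw [log_mul hc.ne' hv.ne'] at this
  linarith

lemma integral_log_sub_om_mul_le {γ : ℝ} (hT : 0 < T) (hγ0 : 0 < γ) (hγ1 : γ < 1)
    {v : ℝ → ℝ} (hvpos : ∀ t ∈ Ioc 0 T, 0 < v t) (hv : IntegrableOn v (Ioc 0 T))
    (hlog : IntegrableOn (fun t => max (-log (v t)) 0) (Ioc 0 T)) :
    ∫ t in Ioc (0:ℝ) T, (log (v t) - om T t * v t)
      ≤ (∫ t in Ioc (0:ℝ) T, (log (vk T γ t) - om T t * vk T γ t))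
        + (T / γ - (T + 1)) * (Vtot v T - Vtot (vk T γ) T) := by
  set ℓ := T / γ - (T + 1)
  have hpointwise : ∀ t ∈ Ioc 0 T, log (v t) - om T t * v t
      ≤ log (vk T γ t) - om T t * vk T γ t + ℓ * (v t - vk T γ t) := by
    intro t ht
    have hc : 0 < T / γ - t := by
      rw [sub_pos, lt_div_iff₀ hγ0]
      nlinarith [ht.1, ht.2]
    have hinv : (T / γ - t) * (T / γ - t)⁻¹ = 1 := mul_inv_cancel₀ hc.ne'
    have hom : om T t = (T / γ - t) - ℓ := by
      rw [om]
      ring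
    have := log_sub_mul_le (hvpos t ht) hc
    rw [vk_eq_inv hγ0.ne', log_inv, hom]
    nlinarith
  have hvk := integrableOn_vk hT hγ1
  have hlogvk : IntegrableOn (fun t => log (vk T γ t)) (Ioc 0 T) :=
    (continuousOn_log_vk hT hγ0 hγ1).integrableOn_Icc.mono_set Ioc_subset_Icc_self
  have hvk_part : IntegrableOn (fun t => log (vk T γ t) - om T t * vk T γ t) (Ioc 0 T) :=
    hlogvk.sub (integrableOn_om_mul hvk)
  have hmult_part : IntegrableOn (fun t => ℓ * (v t - vk T γ t)) (Ioc 0 T) :=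
    (hv.sub hvk).const_mul ℓ
  have hmono : ∫ t in Ioc (0:ℝ) T, (log (v t) - om T t * v t)
      ≤ ∫ t in Ioc (0:ℝ) T, (log (vk T γ t) - om T t * vk T γ t + ℓ * (v t - vk T γ t)) :=
    setIntegral_mono_on
    ((integrableOn_log_of_integrableOn hv hlog).sub (integrableOn_om_mul hv))
    (hvk_part.add hmult_part) measurableSet_Ioc hpointwise
  rwa [integral_add hvk_part hmult_part, integral_const_mul, integral_sub hv hvk] at hmono

/-- Complementary slackness: the multiplier `T / γ - (T + 1)` is nonnegative and vanishes unless
the VaR level `z` is the binding one. -/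
lemma multiplier_mul_sub_nonpos {z a b : ℝ} (hT : 0 < T) (hz : 0 < z)
    (hab : min (T / (T + 1)) z = z → a ≤ b) :
    (T / min (T / (T + 1)) z - (T + 1)) * (a - b) ≤ 0 := by
  rcases le_total (T / (T + 1)) z with h | h
  · rw [min_eq_left h, div_div_cancel₀ hT.ne', sub_self, zero_mul]
  · rw [min_eq_right h] at hab ⊢
    refine mul_nonpos_of_nonneg_of_nonpos ?_ (sub_nonpos.2 (hab rfl))
    rw [sub_nonneg, le_div_iff₀ hz]
    rwa [le_div_iff₀ (by linarith), mul_comm] at h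

lemma log_one_sub_add_mul_log_lt {k γ : ℝ} (hT : 0 < T) (hk : k ∈ Ioo 0 1) (hγ : γ ∈ Ioo 0 1)
    (hne : k ≠ γ) :
    log (1 - k) + T * log k
      < log (1 - γ) + T * log γ + (T / γ - (T + 1)) / (1 - γ) * (k - γ) := by
  have h1γ : 0 < 1 - γ := sub_pos.2 hγ.2
  have hγ0 : γ ≠ 0 := hγ.1.ne'
  have hfirst : log (1 - k) - log (1 - γ) ≤ (1 - k) / (1 - γ) - 1 := by
    rw [← log_div (sub_pos.2 hk.2).ne' h1γ.ne']
    exact log_le_sub_one_of_pos (div_pos (sub_pos.2 hk.2) h1γ)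
  have hsecond : log k - log γ < k / γ - 1 := by
    rw [← log_div hk.1.ne' hγ.1.ne']
    exact log_lt_sub_one_of_pos (div_pos hk.1 hγ.1) (by rwa [ne_eq, div_eq_one_iff_eq hγ.1.ne'])
  have hid : (1 - k) / (1 - γ) - 1 + T * (k / γ - 1) = (T / γ - (T + 1)) / (1 - γ) * (k - γ) := by
    field_simp
    ring
  nlinarith [mul_lt_mul_of_pos_left hsecond hT]

lemma objective_lt_of_ne {z k : ℝ} (hT : 0 < T) (hz0 : 0 < z) (hz1 : z < 1) (hk : k ∈ Ioc 0 z)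
    (hne : k ≠ min (T / (T + 1)) z) :
    log (1 - k) + T * log k
      < log (1 - min (T / (T + 1)) z) + T * log (min (T / (T + 1)) z) := by
  set γ := min (T / (T + 1)) z
  have hγ : γ ∈ Ioo 0 1 := ⟨lt_min (by positivity) hz0, (min_le_right _ _).trans_lt hz1⟩
  have hslack : (T / γ - (T + 1)) * (k - γ) ≤ 0 :=
    multiplier_mul_sub_nonpos hT hz0 fun h => hk.2.trans_eq h.symm
  have hcorr : (T / γ - (T + 1)) / (1 - γ) * (k - γ) ≤ 0 := by
    rw [div_mul_eq_mul_div]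
    exact div_nonpos_of_nonpos_of_nonneg hslack (sub_nonneg.2 hγ.2.le)
  linarith [log_one_sub_add_mul_log_lt hT ⟨hk.1, hk.2.trans_lt hz1⟩ hγ hne]

end Comparison

theorem stmt4_general {d : ℕ} {T : ℝ} (hT : 0 < T)
    (θ : ℝ → E d)
    (hθ2 : IntegrableOn (fun t => ‖θ t‖ ^ 2) (Set.Ioc 0 T))
    {qa : ℝ}
    (r : ℝ → ℝ) (hr : IntegrableOn r (Set.Ioc 0 T)) {x : ℝ}
    (hθ0 : nrm θ T = 0)
    {z : ℝ} (hz0 : 0 < z) (hz1 : z < 1) :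
    Admiss T (fun _ => (0 : E d)) (vk T (min (T / (T + 1)) z)) ∧
    VaROK T θ (fun _ => (0 : E d)) (vk T (min (T / (T + 1)) z)) qa z ∧
    (∀ (y : ℝ → E d) (v : ℝ → ℝ), Admiss T y v → VaROK T θ y v qa z →
      Jcost T x r θ y v ≤ Jcost T x r θ (fun _ => (0 : E d)) (vk T (min (T / (T + 1)) z))) ∧
    ∀ k ∈ Set.Ioc (0:ℝ) z,
      (Real.log (1 - k) + T * Real.log k ≤
        Real.log (1 - min (T / (T + 1)) z) + T * Real.log (min (T / (T + 1)) z)) ∧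
      (Real.log (1 - k) + T * Real.log k =
        Real.log (1 - min (T / (T + 1)) z) + T * Real.log (min (T / (T + 1)) z) →
          k = min (T / (T + 1)) z) := by
  set γ := min (T / (T + 1)) z with hγ
  have hγ0 : 0 < γ := lt_min (by positivity) hz0
  have hγz : γ ≤ z := min_le_right _ _
  have hγ1 : γ < 1 := hγz.trans_lt hz1
  have hstar : Admiss T (fun _ => (0 : E d)) (vk T γ) := admiss_zero_vk hT hγ0 hγ1
  refine ⟨hstar, VaROK_zero_vk hT hγ0 θ qa hz1 hγz, ?_, fun k hk => ?_⟩
  · rintro y v ⟨-, hy, -, hvpos, hv, hlog⟩ hVaR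
    have hθ := ae_eq_zero_of_nrm_eq_zero hθ2 hθ0
    have hslack : (T / γ - (T + 1)) * (Vtot v T - Vtot (vk T γ) T) ≤ 0 :=
      multiplier_mul_sub_nonpos hT hz0 fun h => by
        rw [Vtot_vk_self hT hγ1, hγ, h]
        exact Vtot_le_of_VaROK hT.le hVaR hθ
    have hportfolio := integral_om_mul_le_of_ae_eq_zero hr hy hθ
    have hconsumption := integral_log_sub_om_mul_le hT hγ0 hγ1
      (fun t ht => hvpos t (Ioc_subset_Icc_self ht)) hv hlog
    rw [Jcost_eq x r θ y hv hlog, Jcost_eq x r θ _ hstar.2.2.2.2.1 hstar.2.2.2.2.2]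
    simp only [inner_zero_left, norm_zero, zero_pow two_ne_zero, zero_div, add_zero, sub_zero]
    linarith
  · rcases eq_or_ne k γ with rfl | hne
    · exact ⟨le_rfl, fun _ => rfl⟩
    · have hlt := objective_lt_of_ne hT hz0 hz1 hk hne
      exact ⟨hlt.le, fun h => absurd h hlt.ne⟩

/-- Corollary 4.3 of the paper. -/
theorem stmt4 {d : ℕ} (hd : 1 ≤ d) {T : ℝ} (hT : 0 < T)
    (θ : ℝ → E d) (hθm : Measurable θ)
    (hθ2 : IntegrableOn (fun t => ‖θ t‖ ^ 2) (Set.Ioc 0 T))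
    {a qa : ℝ} (ha0 : 0 < a) (ha2 : a < 1 / 2) (hqneg : qa < 0)
    (hquant : (∫ s in Set.Iic qa, Real.exp (-s ^ 2 / 2)) = a * Real.sqrt (2 * π))
    (r : ℝ → ℝ) (hr : IntegrableOn r (Set.Ioc 0 T)) {x : ℝ} (hx : 0 < x)
    (hθ0 : nrm θ T = 0)
    {z : ℝ} (hz0 : 0 < z) (hz1 : z < 1) :
    Admiss T (fun _ => (0 : E d)) (vk T (min (T / (T + 1)) z)) ∧
    VaROK T θ (fun _ => (0 : E d)) (vk T (min (T / (T + 1)) z)) qa z ∧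
    (∀ (y : ℝ → E d) (v : ℝ → ℝ), Admiss T y v → VaROK T θ y v qa z →
      Jcost T x r θ y v ≤ Jcost T x r θ (fun _ => (0 : E d)) (vk T (min (T / (T + 1)) z))) ∧
    ∀ k ∈ Set.Ioc (0:ℝ) z,
      (Real.log (1 - k) + T * Real.log k ≤
        Real.log (1 - min (T / (T + 1)) z) + T * Real.log (min (T / (T + 1)) z)) ∧
      (Real.log (1 - k) + T * Real.log k =
        Real.log (1 - min (T / (T + 1)) z) + T * Real.log (min (T / (T + 1)) z) →
          k = min (T / (T + 1)) z) :=
  stmt4_general hT θ hθ2 r hr hθ0 hz0 hz1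
end
end

section
/- Assume |q_α| > ‖θ‖_T. Then the function k_min(x) = −x‖θ‖_T − f_α(x) is strictly increasing on [0,∞) with k_min(0) = 0, and for every y ∈ L²([0,T];ℝ^d): K₁(y) ≥ k_min(‖y‖_T) ≥ 0, with K₁(y) = 0 if and only if y = 0 almost everywhere on [0,T]. -/
open MeasureTheory Real Set Filter
open scoped RealInnerProductSpace ENNReal

noncomputable section

/-- Mills ratio ϖ(z) = e^{z²/2}∫_z^∞ e^{-s²/2} ds -/
def mills (z : ℝ) : ℝ := Real.exp (z ^ 2 / 2) * ∫ s in Set.Ioi z, Real.exp (-s ^ 2 / 2)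

/-- ι_α(u) = 1/ϖ(u + |q_α|) − u -/
def iotaA (qa u : ℝ) : ℝ := 1 / mills (u + |qa|) - u

/-- F_α(z) = (∫_z^∞ e^{-s²/2} ds)/(∫_{|q_α|}^∞ e^{-s²/2} ds) -/
def Fal (qa z : ℝ) : ℝ :=
  (∫ s in Set.Ioi z, Real.exp (-s ^ 2 / 2)) / ∫ s in Set.Ioi |qa|, Real.exp (-s ^ 2 / 2)

/-- f_α(x) = ln F_α(|q_α| + x) -/
def fal (qa x : ℝ) : ℝ := Real.log (Fal qa (|qa| + x))

/-- G₁(u,λ) -/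
def G1fun {d : ℕ} (T : ℝ) (θ : ℝ → E d) (qa u lam : ℝ) : ℝ :=
  ∫ t in Set.Ioc (0:ℝ) T,
    (om T t + lam) ^ 2 * ‖θ t‖ ^ 2 / (lam * iotaA qa u + u * (om T t + lam)) ^ 2

open Classical in
/-- ρ₁(λ) = inf{u ≥ 0 : G₁(u,λ) ≤ 1}, with value +∞ if no such u exists -/
def rho1 {d : ℕ} (T : ℝ) (θ : ℝ → E d) (qa lam : ℝ) : ℝ≥0∞ :=
  if {u : ℝ | 0 ≤ u ∧ G1fun T θ qa u lam ≤ 1}.Nonempty then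
    ENNReal.ofReal (sInf {u : ℝ | 0 ≤ u ∧ G1fun T θ qa u lam ≤ 1})
  else ⊤

open Classical in
/-- ς_λ(t), with ς_λ ≡ 1 if ρ₁(λ) = +∞ -/
def sig {d : ℕ} (T : ℝ) (θ : ℝ → E d) (qa lam t : ℝ) : ℝ :=
  if rho1 T θ qa lam = ⊤ then 1
  else (rho1 T θ qa lam).toReal * (om T t + lam) /
    (lam * iotaA qa (rho1 T θ qa lam).toReal + (rho1 T θ qa lam).toReal * (om T t + lam))

def lamMax' {d : ℕ} (T : ℝ) (θ : ℝ → E d) (qa : ℝ) : ℝ :=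
  (k1 T θ + Real.sqrt (k2 T θ * (iotaA qa 0 ^ 2 - nrm θ T ^ 2) + k1 T θ ^ 2)) /
    (iotaA qa 0 ^ 2 - nrm θ T ^ 2)

/-- Φ₁(λ) = −∫₀^T ς_λ(t)|θ_t|² dt − ln F_α(|q_α| + ‖ς_λθ‖_T) -/
def Phi1 {d : ℕ} (T : ℝ) (θ : ℝ → E d) (qa lam : ℝ) : ℝ :=
  -(∫ t in Set.Ioc (0:ℝ) T, sig T θ qa lam t * ‖θ t‖ ^ 2)
    - Real.log (Fal qa (|qa| + nrm (fun t => sig T θ qa lam t • θ t) T))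

/-- K₁(y) = −(y,θ)_T − f_α(‖y‖_T) -/
def K1fun {d : ℕ} (T : ℝ) (θ y : ℝ → E d) (qa : ℝ) : ℝ :=
  -ipr y θ T - fal qa (nrm y T)

/-! The tail `z ↦ ∫_z^∞ e^{-s²/2} ds` satisfies the Mills-ratio bound `z · tail z ≤ e^{-z²/2}`, so
the derivative `-‖θ‖_T + e^{-z²/2}/tail z` of `k_min` at `z = |q_α| + x` is at least `|q_α| + x - ‖θ‖_T > 0`.
Hence `k_min` is strictly increasing from `k_min 0 = 0`, and Cauchy–Schwarz `(y,θ)_T ≤ ‖y‖_T ‖θ‖_T` gives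
`K₁(y) ≥ k_min(‖y‖_T) ≥ 0`, with equality forcing `‖y‖_T = 0`. -/

def gaussTail (z : ℝ) : ℝ := ∫ s in Ioi z, exp (-s ^ 2 / 2)

lemma integrable_exp_neg_sq_div_two : Integrable fun s : ℝ => exp (-s ^ 2 / 2) := by
  simpa [neg_div, div_eq_inv_mul] using integrable_exp_neg_mul_sq (b := (1 / 2 : ℝ)) (by norm_num)

lemma gaussTail_pos (z : ℝ) : 0 < gaussTail z := by
  rw [gaussTail, setIntegral_pos_iff_support_of_nonneg_ae
    (ae_of_all _ fun s => (exp_pos _).le) integrable_exp_neg_sq_div_two.integrableOn]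
  simp [Function.support, exp_ne_zero]

lemma hasDerivAt_gaussTail (z : ℝ) : HasDerivAt gaussTail (-exp (-z ^ 2 / 2)) z := by
  have hcont : Continuous fun s : ℝ => exp (-s ^ 2 / 2) := by fun_prop
  have hint := integrable_exp_neg_sq_div_two
  have hprim : HasDerivAt (fun u => ∫ s in (0 : ℝ)..u, exp (-s ^ 2 / 2)) (exp (-z ^ 2 / 2)) z :=
    intervalIntegral.integral_hasDerivAt_right hint.intervalIntegrable
      hcont.aestronglyMeasurable.stronglyMeasurableAtFilter hcont.continuousAt
  refine (hprim.const_sub (gaussTail 0)).congr_of_eventuallyEq (Eventually.of_forall fun u => ?_)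
  simp only [gaussTail]
  rw [← intervalIntegral.integral_Ioi_sub_Ioi' hint.integrableOn hint.integrableOn, sub_sub_cancel]

lemma mul_gaussTail_le (z : ℝ) : z * gaussTail z ≤ exp (-z ^ 2 / 2) := by
  have hderiv : ∀ s ∈ Ioi z, HasDerivAt (fun s => -exp (-s ^ 2 / 2)) (s * exp (-s ^ 2 / 2)) s :=
    fun s _ => by
      have h : HasDerivAt (fun s : ℝ => -s ^ 2 / 2) (-s) s :=
        ((hasDerivAt_pow 2 s).neg.div_const 2).congr_deriv (by ring)
      exact h.exp.neg.congr_deriv (by ring)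
  have hint : IntegrableOn (fun s : ℝ => s * exp (-s ^ 2 / 2)) (Ioi z) := by
    simpa [neg_div, div_eq_inv_mul] using
      (integrable_mul_exp_neg_mul_sq (b := (1 / 2 : ℝ)) (by norm_num)).integrableOn
  have hlim : Tendsto (fun s : ℝ => -exp (-s ^ 2 / 2)) atTop (nhds 0) := by
    simpa [neg_div] using (tendsto_exp_neg_atTop_nhds_zero.comp
      ((tendsto_pow_atTop two_ne_zero).atTop_div_const (by norm_num : (0 : ℝ) < 2))).neg
  have hfirst : ∫ s in Ioi z, s * exp (-s ^ 2 / 2) = exp (-z ^ 2 / 2) := by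
    rw [integral_Ioi_of_hasDerivAt_of_tendsto (by fun_prop) hderiv hint hlim]
    ring
  calc z * gaussTail z = ∫ s in Ioi z, z * exp (-s ^ 2 / 2) := (integral_const_mul _ _).symm
    _ ≤ ∫ s in Ioi z, s * exp (-s ^ 2 / 2) :=
        setIntegral_mono_on (integrable_exp_neg_sq_div_two.const_mul z).integrableOn hint
          measurableSet_Ioi fun s hs => mul_le_mul_of_nonneg_right (le_of_lt hs) (exp_pos _).le
    _ = exp (-z ^ 2 / 2) := hfirst

lemma hasDerivAt_log_gaussTail_div (q u : ℝ) :
    HasDerivAt (fun u => log (gaussTail (q + u) / gaussTail q))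
      (-exp (-(q + u) ^ 2 / 2) / gaussTail (q + u)) u := by
  have h := (((hasDerivAt_gaussTail (q + u)).comp_const_add q u).div_const (gaussTail q)).log
    (div_pos (gaussTail_pos _) (gaussTail_pos q)).ne'
  convert h using 1
  field_simp [(gaussTail_pos q).ne']

theorem strictMonoOn_neg_mul_sub_log_gaussTail_div {c q : ℝ} (hcq : c ≤ q) :
    StrictMonoOn (fun u => -(u * c) - log (gaussTail (q + u) / gaussTail q)) (Ici 0) := by
  have hderiv (u : ℝ) : HasDerivAt (fun u => -(u * c) - log (gaussTail (q + u) / gaussTail q))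
      (-c + exp (-(q + u) ^ 2 / 2) / gaussTail (q + u)) u :=
    (((hasDerivAt_id u).mul_const c).neg.sub (hasDerivAt_log_gaussTail_div q u)).congr_deriv
      (by simp only [one_mul, neg_div, sub_neg_eq_add])
  refine strictMonoOn_of_deriv_pos (convex_Ici 0)
    (fun u _ => (hderiv u).continuousAt.continuousWithinAt) fun u hu => ?_
  rw [interior_Ici, mem_Ioi] at hu
  have hmills : q + u ≤ exp (-(q + u) ^ 2 / 2) / gaussTail (q + u) :=
    (le_div_iff₀ (gaussTail_pos _)).2 (mul_gaussTail_le _)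
  rw [(hderiv u).deriv]
  linarith

theorem integral_inner_le_sqrt_mul_sqrt {α F : Type*} [MeasurableSpace α] {μ : Measure α}
    [NormedAddCommGroup F] [InnerProductSpace ℝ F] {f g : α → F}
    (hf : MemLp f 2 μ) (hg : MemLp g 2 μ) :
    ∫ a, ⟪f a, g a⟫ ∂μ ≤ √(∫ a, ‖f a‖ ^ 2 ∂μ) * √(∫ a, ‖g a‖ ^ 2 ∂μ) := by
  have hinner (u v : α → F) (hu : MemLp u 2 μ) (hv : MemLp v 2 μ) :
      ⟪hu.toLp u, hv.toLp v⟫ = ∫ a, ⟪u a, v a⟫ ∂μ := by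
    rw [L2.inner_def]
    refine integral_congr_ae ?_
    filter_upwards [hu.coeFn_toLp, hv.coeFn_toLp] with a hua hva
    rw [hua, hva]
  have hnorm (u : α → F) (hu : MemLp u 2 μ) : ‖hu.toLp u‖ = √(∫ a, ‖u a‖ ^ 2 ∂μ) := by
    rw [← sqrt_sq (norm_nonneg (hu.toLp u)), ← real_inner_self_eq_norm_sq, hinner]
    simp_rw [real_inner_self_eq_norm_sq]
  rw [← hinner f g hf hg, ← hnorm f hf, ← hnorm g hg]
  exact real_inner_le_norm _ _

section RunningNorm

variable {d : ℕ} {T : ℝ}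

lemma memLp_two_of_L2fun {y : ℝ → E d} (hy : L2fun T y) :
    MemLp y 2 (volume.restrict (Ioc 0 T)) :=
  (memLp_two_iff_integrable_sq_norm hy.1.aestronglyMeasurable).2 hy.2

lemma ipr_le_nrm_mul_nrm {y θ : ℝ → E d} (hy : L2fun T y) (hθ : L2fun T θ) :
    ipr y θ T ≤ nrm y T * nrm θ T :=
  integral_inner_le_sqrt_mul_sqrt (memLp_two_of_L2fun hy) (memLp_two_of_L2fun hθ)

lemma nrm_eq_zero_iff {y : ℝ → E d} (hy : IntegrableOn (fun t => ‖y t‖ ^ 2) (Ioc 0 T)) :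
    nrm y T = 0 ↔ y =ᵐ[volume.restrict (Ioc (0 : ℝ) T)] 0 := by
  rw [nrm, sqrt_eq_zero (integral_nonneg fun t => sq_nonneg _),
    integral_eq_zero_iff_of_nonneg (fun t => sq_nonneg _) hy]
  simp [Filter.EventuallyEq]

lemma ipr_eq_zero_of_ae_eq_zero {y : ℝ → E d} (θ : ℝ → E d)
    (hy : y =ᵐ[volume.restrict (Ioc (0 : ℝ) T)] 0) : ipr y θ T = 0 := by
  rw [ipr, integral_eq_zero_of_ae]
  filter_upwards [hy] with t ht
  simp [ht]

end RunningNorm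

lemma fal_eq_log_gaussTail_div (qa x : ℝ) :
    fal qa x = log (gaussTail (|qa| + x) / gaussTail |qa|) :=
  rfl

lemma fal_zero (qa : ℝ) : fal qa 0 = 0 := by
  rw [fal_eq_log_gaussTail_div, add_zero, div_self (gaussTail_pos _).ne', log_one]

theorem stmt19_general {d : ℕ} {T : ℝ}
    (θ : ℝ → E d) (hθm : Measurable θ)
    (hθ2 : IntegrableOn (fun t => ‖θ t‖ ^ 2) (Set.Ioc 0 T))
    {qa : ℝ}
    (hqθ : nrm θ T < |qa|) :
    StrictMonoOn (fun u : ℝ => -(u * nrm θ T) - fal qa u) (Set.Ici 0) ∧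
    (-(0 * nrm θ T) - fal qa 0 = 0) ∧
    ∀ y : ℝ → E d, L2fun T y →
      (-(nrm y T * nrm θ T) - fal qa (nrm y T) ≤ K1fun T θ y qa) ∧
      (0 ≤ -(nrm y T * nrm θ T) - fal qa (nrm y T)) ∧
      (K1fun T θ y qa = 0 ↔
        y =ᵐ[volume.restrict (Set.Ioc (0:ℝ) T)] fun _ => (0 : E d)) := by
  set kmin := fun u : ℝ => -(u * nrm θ T) - fal qa u
  have hmono : StrictMonoOn kmin (Ici 0) := by
    simpa only [kmin, fal_eq_log_gaussTail_div] using
      strictMonoOn_neg_mul_sub_log_gaussTail_div hqθ.le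
  have hk0 : kmin 0 = 0 := by simp [kmin, fal_zero]
  refine ⟨hmono, hk0, fun y hy => ?_⟩
  have hny : nrm y T ∈ Ici 0 := sqrt_nonneg _
  have hlower : kmin (nrm y T) ≤ K1fun T θ y qa := by
    have := ipr_le_nrm_mul_nrm hy ⟨hθm, hθ2⟩
    simp only [kmin, K1fun]
    linarith
  have hpos : 0 ≤ kmin (nrm y T) := hk0 ▸ hmono.monotoneOn self_mem_Ici hny hny
  refine ⟨hlower, hpos, ⟨fun hK => ?_, fun hy0 => ?_⟩⟩
  · have hle : kmin (nrm y T) ≤ kmin 0 := by rw [hk0, ← hK]; exact hlower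
    have hn0 : nrm y T = 0 := le_antisymm ((hmono.le_iff_le hny self_mem_Ici).1 hle) hny
    exact (nrm_eq_zero_iff hy.2).1 hn0
  · rw [K1fun, ipr_eq_zero_of_ae_eq_zero θ hy0, (nrm_eq_zero_iff hy.2).2 hy0, fal_zero]
    ring

/-- positivity and definiteness of the ES constraint functional K₁. -/
theorem stmt19 {d : ℕ} (hd : 1 ≤ d) {T : ℝ} (hT : 0 < T)
    (θ : ℝ → E d) (hθm : Measurable θ)
    (hθ2 : IntegrableOn (fun t => ‖θ t‖ ^ 2) (Set.Ioc 0 T))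
    {a qa : ℝ} (ha0 : 0 < a) (ha2 : a < 1 / 2) (hqneg : qa < 0)
    (hquant : (∫ s in Set.Iic qa, Real.exp (-s ^ 2 / 2)) = a * Real.sqrt (2 * π))
    (hqθ : nrm θ T < |qa|) :
    StrictMonoOn (fun u : ℝ => -(u * nrm θ T) - fal qa u) (Set.Ici 0) ∧
    (-(0 * nrm θ T) - fal qa 0 = 0) ∧
    ∀ y : ℝ → E d, L2fun T y →
      (-(nrm y T * nrm θ T) - fal qa (nrm y T) ≤ K1fun T θ y qa) ∧
      (0 ≤ -(nrm y T * nrm θ T) - fal qa (nrm y T)) ∧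
      (K1fun T θ y qa = 0 ↔
        y =ᵐ[volume.restrict (Set.Ioc (0:ℝ) T)] fun _ => (0 : E d)) :=
  stmt19_general θ hθm hθ2 hqθ
end
end
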